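/- For i < j, ψ_{i,j} = Σ_{k=i}^{j−1} C(i+j−2, k) equals the (i,j)-minor of the infinite lower-triangular Pascal matrix A (with A_{a,b} = C(a−1, b−1)) summed over all strictly increasing column pairs: concretely for length-2 sequences, ψ_{i,j} = Σ_{1 ≤ p < q} [C(i−1,p−1)C(j−1,q−1) − C(j−1,p−1)C(i−1,q−1)]. -/

import Mathlib

open Finset

lemma key (m n N : ℕ) (hN : n < N) :
    (∑ a ∈ range N, ∑ b ∈ range N,
      if a < b then m.choose a * n.choose b else 0)
    = ∑ s ∈ range n, (m + n).choose s := by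
  have h1 : ∀ a, (∑ b ∈ range N, if a < b then m.choose a * n.choose b else 0)
      = ∑ b ∈ range (n+1), if a < b then m.choose a * n.choose b else 0 := by
    intro a
    refine (Finset.sum_subset (Finset.range_subset_range.2 (by omega)) ?_).symm
    intro b _ hb
    have : n < b := by simpa using hb
    simp [Nat.choose_eq_zero_of_lt this]
  simp only [h1]
  have h2 : ∀ a, (∑ b ∈ range (n+1), if a < b then m.choose a * n.choose b else 0)
      = ∑ b ∈ range (n+1), if a + b < n then m.choose a * n.choose b else 0 := by
    intro a
    rw [← Finset.sum_range_reflect]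
    refine Finset.sum_congr rfl fun b hb => ?_
    have hbn : b ≤ n := by simp at hb; omega
    have hsym : n.choose (n + 1 - 1 - b) = n.choose b := by
      simpa using Nat.choose_symm hbn
    have hlt : (a < n + 1 - 1 - b) ↔ (a + b < n) := by omega
    rw [hsym]
    simp only [hlt]
  simp only [h2]
  have h3 : ∀ a b, (if a + b < n then m.choose a * n.choose b else 0)
      = ∑ s ∈ range n, if a + b = s then m.choose a * n.choose b else 0 := by
    intro a b
    rw [Finset.sum_ite_eq (range n) (a+b)]
    simp
  simp only [h3]
  have h4 : ∀ a, (∑ b ∈ range (n+1), ∑ s ∈ range n,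
        if a + b = s then m.choose a * n.choose b else 0)
      = ∑ s ∈ range n, ∑ b ∈ range (n+1),
        if a + b = s then m.choose a * n.choose b else 0 := fun a => Finset.sum_comm
  simp only [h4]
  rw [Finset.sum_comm]
  refine Finset.sum_congr rfl fun s hs => ?_
  have hsn : s < n := by simpa using hs
  -- inner over b collapses
  have h5 : ∀ a, (∑ b ∈ range (n+1), if a + b = s then m.choose a * n.choose b else 0)
      = if a ≤ s then m.choose a * n.choose (s - a) else 0 := by
    intro a
    by_cases ha : a ≤ s
    · have : ∀ b, (a + b = s) = (b = s - a) := by intro b; simp; omega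
      simp only [this]
      rw [Finset.sum_ite_eq' (range (n+1)) (s - a)]
      rw [if_pos ha, if_pos (by simp; omega)]
    · rw [if_neg ha]
      refine Finset.sum_eq_zero fun b _ => if_neg (by omega)
  simp only [h5]
  have h6 : (∑ a ∈ range N, if a ≤ s then m.choose a * n.choose (s - a) else 0)
      = ∑ a ∈ range (s+1), m.choose a * n.choose (s - a) := by
    rw [← Finset.sum_subset (show Finset.range (s+1) ⊆ Finset.range N from Finset.range_subset_range.2 (by omega))]
    · exact Finset.sum_congr rfl fun a ha => if_pos (by simp at ha; omega)
    · intro a _ ha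
      exact if_neg (by simp at ha; omega)
  rw [h6, Nat.add_choose_eq, Finset.Nat.sum_antidiagonal_eq_sum_range_succ_mk]

lemma icc_one_sum (N : ℕ) (f : ℕ → ℤ) :
    ∑ p ∈ Icc 1 N, f p = ∑ a ∈ range N, f (a + 1) := by
  rw [← Finset.Ico_add_one_right_eq_Icc, Finset.sum_Ico_eq_sum_range]
  simp [add_comm]

lemma refl_sum (i j : ℕ) (hi : 0 < i) (hij : i < j) :
    ∑ s ∈ Ico (i-1) (j-1), (i+j-2).choose s
      = ∑ k ∈ Icc i (j-1), (i+j-2).choose k := by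
  refine Finset.sum_nbij' (fun s => (i+j-2) - s) (fun k => (i+j-2) - k) ?_ ?_ ?_ ?_ ?_
  · intro s hs; simp only [mem_Ico] at hs; simp only [mem_Icc]; omega
  · intro k hk; simp only [mem_Icc] at hk; simp only [mem_Ico]; omega
  · intro s hs; simp only [mem_Ico] at hs; omega
  · intro k hk; simp only [mem_Icc] at hk; omega
  · intro s hs; simp only [mem_Ico] at hs
    exact (Nat.choose_symm (by omega)).symm

/-- For `i < j`, `ψ_{i,j} = ∑_{k=i}^{j-1} C(i+j-2, k)`. -/
def psiTwo (i j : ℕ) : ℤ := ∑ k ∈ Finset.Icc i (j - 1), (Nat.choose (i + j - 2) k : ℤ)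

/-- `ψ_{i,j}` as a sum of 2×2 minors of the Pascal matrix `A_{a,b} = C(a−1,b−1)`
over all strictly increasing column pairs `p < q` (the range `[1, i+j]` exhausts
all nonzero terms since the binomials vanish for large column indices). -/
theorem psiTwo_eq_sum_of_minors (i j : ℕ) (hi : 0 < i) (hij : i < j) :
    psiTwo i j =
      ∑ p ∈ Finset.Icc 1 (i + j), ∑ q ∈ Finset.Icc 1 (i + j),
        if p < q then
          ((Nat.choose (i - 1) (p - 1) * Nat.choose (j - 1) (q - 1) : ℤ) -
           (Nat.choose (j - 1) (p - 1) * Nat.choose (i - 1) (q - 1) : ℤ))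
        else 0 := by
  simp only [icc_one_sum]
  simp only [Nat.add_sub_cancel, add_lt_add_iff_right]
  have hsplit : ∀ a b : ℕ, (if a < b then
        ((Nat.choose (i - 1) a * Nat.choose (j - 1) b : ℤ) -
         (Nat.choose (j - 1) a * Nat.choose (i - 1) b : ℤ)) else 0)
      = ((if a < b then ((i-1).choose a * (j-1).choose b : ℕ) else 0 : ℕ) : ℤ)
        - ((if a < b then ((j-1).choose a * (i-1).choose b : ℕ) else 0 : ℕ) : ℤ) := by
    intro a b; split <;> push_cast <;> ring
  simp only [hsplit]
  simp only [Finset.sum_sub_distrib]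
  simp only [← Nat.cast_sum]
  rw [key (i-1) (j-1) (i+j) (by omega), key (j-1) (i-1) (i+j) (by omega)]
  have hM1 : (i-1) + (j-1) = i + j - 2 := by omega
  have hM2 : (j-1) + (i-1) = i + j - 2 := by omega
  rw [hM1, hM2]
  have hconsec : (∑ s ∈ range (i-1), (i+j-2).choose s)
      + (∑ s ∈ Ico (i-1) (j-1), (i+j-2).choose s)
      = ∑ s ∈ range (j-1), (i+j-2).choose s := by
    simp only [Finset.range_eq_Ico]
    refine Finset.sum_Ico_consecutive _ ?_ ?_ <;> omega
  have hrefl := refl_sum i j hi hij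
  unfold psiTwo
  rw [← Nat.cast_sum]
  omega
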